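/- Let n ≥ 2, let τ_n : ℤ → ℤ be the bijection i ↦ n+1−i, let w* = τ_n ∘ w ∘ τ_n for w ∈ S̃_n (a group automorphism of S̃_n), and let I_* = {w ∈ S̃_n : w⁻¹ = w*}. Define f : I_* → ℕ by f(w) = ⌊ #{i ∈ {1,…,n} : w(i) ≡ 1−i (mod n)} / 2 ⌋. Then f satisfies the three properties characterizing Hultman's twisted absolute length: (a) f(id) = 0; (b) f(s·w·s*) = f(w) for every w ∈ I_* and every simple generator s ∈ {s_0, s_1, …, s_{n−1}}; (c) whenever w ∈ I_* and s is a simple generator with w·s ∈ I_*, one has f(w·s) − f(w) = ℓ(w·s) − ℓ(w) (as integers). -/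

import Mathlib

open scoped Classical

noncomputable section

/-- The function underlying the simple generator `s_i` of the affine symmetric group. -/
def sFun (n i : ℕ) (j : ℤ) : ℤ :=
  if (n : ℤ) ∣ j - (i : ℤ) then j + 1
  else if (n : ℤ) ∣ j - ((i : ℤ) + 1) then j - 1
  else j

lemma sFun_invol (n i : ℕ) (h : ¬ (n : ℤ) ∣ 1) : Function.Involutive (sFun n i) := by
  intro j
  unfold sFun
  by_cases h1 : (n : ℤ) ∣ j - (i : ℤ)
  · have h2 : ¬ (n : ℤ) ∣ (j + 1) - (i : ℤ) := by
      intro hd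
      have h3 : (n : ℤ) ∣ ((j + 1) - (i : ℤ)) - (j - (i : ℤ)) := dvd_sub hd h1
      have h4 : ((j + 1) - (i : ℤ)) - (j - (i : ℤ)) = 1 := by ring
      rw [h4] at h3
      exact h h3
    have h3 : (n : ℤ) ∣ (j + 1) - ((i : ℤ) + 1) := by
      have h4 : (j + 1) - ((i : ℤ) + 1) = j - (i : ℤ) := by ring
      rw [h4]
      exact h1
    rw [if_pos h1, if_neg h2, if_pos h3]
    ring
  · by_cases h2 : (n : ℤ) ∣ j - ((i : ℤ) + 1)
    · have h3 : (n : ℤ) ∣ (j - 1) - (i : ℤ) := by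
        have h4 : (j - 1) - (i : ℤ) = j - ((i : ℤ) + 1) := by ring
        rw [h4]
        exact h2
      rw [if_neg h1, if_pos h2, if_pos h3]
      ring
    · rw [if_neg h1, if_neg h2, if_neg h1, if_neg h2]

/-- The simple generator `s_i` of the affine symmetric group `S̃_n`:
`j ↦ j+1` if `j ≡ i (mod n)`, `j ↦ j-1` if `j ≡ i+1 (mod n)`, `j ↦ j` otherwise.
(For the degenerate case `n = 1`, where this recipe does not define a bijection,
we use the identity; all results below assume `n ≥ 2`.) -/
def sGen (n i : ℕ) : Equiv.Perm ℤ :=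
  if h : (n : ℤ) ∣ 1 then 1
  else ⟨sFun n i, sFun n i, sFun_invol n i h, sFun_invol n i h⟩

/-- Membership in the affine symmetric group `S̃_n`: a bijection `w : ℤ → ℤ` with
`w (i + n) = w i + n` for all `i` and `∑_{i=1}^n w i = ∑_{i=1}^n i`. -/
def IsAffinePerm (n : ℕ) (w : Equiv.Perm ℤ) : Prop :=
  (∀ i : ℤ, w (i + (n : ℤ)) = w i + (n : ℤ)) ∧
    ∑ i ∈ Finset.Icc (1 : ℤ) (n : ℤ), w i = ∑ i ∈ Finset.Icc (1 : ℤ) (n : ℤ), i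

/-- The length of `w ∈ S̃_n`: the number of pairs `(i, j)` with `i < j`, `1 ≤ j ≤ n`
and `w i > w j`. -/
def ellA (n : ℕ) (w : Equiv.Perm ℤ) : ℕ :=
  Set.ncard {p : ℤ × ℤ | p.1 < p.2 ∧ 1 ≤ p.2 ∧ p.2 ≤ (n : ℤ) ∧ w p.2 < w p.1}

/-- The absolute length of an involution `w ∈ S̃_n`:
`(n − #{i ∈ {1,…,n} : w i = i}) / 2`. -/
def ellAbs (n : ℕ) (w : Equiv.Perm ℤ) : ℕ :=
  (n - Set.ncard {i : ℤ | 1 ≤ i ∧ i ≤ (n : ℤ) ∧ w i = i}) / 2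

/-- `Ω_n`: involutions in `S̃_n` which are minimal length double coset representatives
for the parabolic subgroup generated by `s_1, …, s_{n-1}`. -/
def OmegaSet (n : ℕ) : Set (Equiv.Perm ℤ) :=
  {w | IsAffinePerm n w ∧ w * w = 1 ∧
    ∀ i : ℕ, 1 ≤ i → i ≤ n - 1 →
      ellA n (sGen n i * w) = ellA n w + 1 ∧ ellA n (w * sGen n i) = ellA n w + 1}

/-- Inverse of a power series with constant term `1` (via `invOfUnit`). -/
def pinv (f : PowerSeries ℤ) : PowerSeries ℤ := PowerSeries.invOfUnit f 1

/-- Substitution of `q ↦ q²` in a power series: `(sq2 f)(q) = f(q²)`. -/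
def sq2 (f : PowerSeries ℤ) : PowerSeries ℤ :=
  PowerSeries.mk fun j => if 2 ∣ j then PowerSeries.coeff (R := ℤ) (j / 2) f else 0

/-- The `q`-integer `[m]_q = 1 + q + ⋯ + q^{m-1}` as a power series. -/
def qInt (m : ℕ) : PowerSeries ℤ := ∑ i ∈ Finset.range m, (PowerSeries.X : PowerSeries ℤ) ^ i

/-- The `q`-factorial `[m]_q!`. -/
def qFact (m : ℕ) : PowerSeries ℤ := ∏ k ∈ Finset.range m, qInt (k + 1)

/-- The Gaussian binomial coefficient `binom(m, k)_q = [m]_q!/([k]_q![m-k]_q!)`. -/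
def qBinom (m k : ℕ) : PowerSeries ℤ := qFact m * pinv (qFact k * qFact (m - k))

/-- The `q`-Pochhammer symbol `(−q^{k+1}; q)_m = ∏_{j=0}^{m-1} (1 + q^{k+1+j})`. -/
def qPochNeg (k m : ℕ) : PowerSeries ℤ :=
  ∏ j ∈ Finset.range m, (1 + (PowerSeries.X : PowerSeries ℤ) ^ (k + 1 + j))

/-- The Poincaré series `P̃_n(q) = ∑_{w ∈ S̃_n} q^{ℓ(w)}`, defined coefficientwise:
the coefficient of `q^j` is the (finite) number of `w ∈ S̃_n` with `ℓ(w) = j`. -/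
def Ptilde (n : ℕ) : PowerSeries ℤ :=
  PowerSeries.mk fun j =>
    (Nat.card {w : Equiv.Perm ℤ // IsAffinePerm n w ∧ ellA n w = j} : ℤ)

/-- The generating set `{s_i : i ∈ K_w}` where
`K_w = {i ∈ {1,…,n−1} : w s_i w ∈ {s_1,…,s_{n−1}}}`. -/
def Kgens (n : ℕ) (w : Equiv.Perm ℤ) : Set (Equiv.Perm ℤ) :=
  {y | ∃ i : ℕ, 1 ≤ i ∧ i ≤ n - 1 ∧ y = sGen n i ∧
      ∃ j : ℕ, 1 ≤ j ∧ j ≤ n - 1 ∧ w * sGen n i * w = sGen n j}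

/-- `F_w(q) = ∑_{x ∈ W_{K_w}, w x w = x} q^{ℓ(x)}`, defined coefficientwise. -/
def Fw (n : ℕ) (w : Equiv.Perm ℤ) : PowerSeries ℤ :=
  PowerSeries.mk fun j =>
    (Nat.card {x : Equiv.Perm ℤ //
        x ∈ Subgroup.closure (Kgens n w) ∧ w * x * w = x ∧ ellA n x = j} : ℤ)

/-- The `q`-part of the summand of `T_n(s,q)` attached to `w ∈ Ω_n`:
`q^{ℓ(w)} ((1−q)/(1+q))^{ℓ'(w)} P_n(q²) / F_w(q)`. -/
def termW (n : ℕ) (w : Equiv.Perm ℤ) : PowerSeries ℤ :=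
  (PowerSeries.X : PowerSeries ℤ) ^ ellA n w *
    ((1 - PowerSeries.X) * pinv (1 + PowerSeries.X)) ^ ellAbs n w *
    sq2 (qFact n) * pinv (Fw n w)

/-- The coefficient of `s^k` in `∑_{w ∈ Ω_n} q^{ℓ(w)} (s(1−q)/(1+q))^{ℓ'(w)} P_n(q²)/F_w(q)`,
computed coefficientwise in `q` (the sum over `w` converges coefficientwise). -/
def innerSum (n k : ℕ) : PowerSeries ℤ :=
  PowerSeries.mk fun j =>
    ∑' w : {w : Equiv.Perm ℤ // w ∈ OmegaSet n ∧ ellAbs n w = k},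
      PowerSeries.coeff (R := ℤ) j (termW n w.1)

/-- The power series `T_n(s, q) ∈ ℤ[[s, q]]`, realized as an element of `(ℤ[[q]])[[s]]`:
`T_n(s,q) = (P̃_n(q)/P̃_n(q²)) ∑_{w ∈ Ω_n} q^{ℓ(w)} (s(1−q)/(1+q))^{ℓ'(w)} P_n(q²)/F_w(q)`. -/
def Tser (n : ℕ) : PowerSeries (PowerSeries ℤ) :=
  PowerSeries.mk fun k => Ptilde n * pinv (sq2 (Ptilde n)) * innerSum n k

end

lemma tau_aux (n : ℕ) : ∀ i : ℤ, (n : ℤ) + 1 - ((n : ℤ) + 1 - i) = i := fun i => by ring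

/-- The bijection `τ_n : ℤ → ℤ`, `i ↦ n + 1 − i`. -/
def tauN (n : ℕ) : Equiv.Perm ℤ :=
  ⟨fun i => (n : ℤ) + 1 - i, fun i => (n : ℤ) + 1 - i, tau_aux n, tau_aux n⟩

/-- `f(w) = ⌊#{i ∈ {1,…,n} : w i ≡ 1 − i (mod n)}/2⌋`. -/
noncomputable def fTw (n : ℕ) (w : Equiv.Perm ℤ) : ℕ :=
  Set.ncard {i : ℤ | 1 ≤ i ∧ i ≤ (n : ℤ) ∧ (n : ℤ) ∣ w i - (1 - i)} / 2

/-!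
Write `u = τ_n w`. An integer `a` is counted by `f(w)` exactly when `u a ≡ a (mod n)`, so `f(w)`
is half the number of fixed points of the map `ū` induced by `u` on `ℤ/n`; for `w = 1` this map
is `r ↦ 1 - r`, whose only possible fixed point is `1/2`. Since `τ_n (s w s*) = c (τ_n w) c` for
the involution `c = τ_n s τ_n`, the map `ū` only gets conjugated in (b). In (c), the two twisted
involution conditions say that `u` commutes with `s = s_i`; hence `ū` either fixes both residues
`i, i + 1`, and then `w (i + 1) = w i - 1`, or swaps them, and then `w (i + 1) = w i + 1`.
Multiplying by `s` removes, resp. creates, these two fixed points, while `ℓ(w s) = ℓ(w) + 1`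
exactly when `w i < w (i + 1)`.
-/

open Function Set

section FixedPoints

variable {α : Type*}

lemma ncard_fixedPoints_conj {g u : α → α} (hg : Involutive g) :
    (fixedPoints ((g ∘ u) ∘ g)).ncard = (fixedPoints u).ncard := by
  have := (bijOn_fixedPoints_comp (g ∘ u) g).ncard_eq
  rwa [← comp_assoc g g u, hg.comp_self, id_comp] at this

lemma ncard_fixedPoints_eq_comp_swap_add_two [DecidableEq α] [Finite α] {u : α → α} {a b : α}
    (hab : a ≠ b) (ha : u a = a) (hb : u b = b) :
    (fixedPoints u).ncard = (fixedPoints (u ∘ Equiv.swap a b)).ncard + 2 := by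
  have hsub : {a, b} ⊆ fixedPoints u := by
    rintro x (rfl | rfl)
    exacts [ha, hb]
  have hfix : fixedPoints (u ∘ Equiv.swap a b) = fixedPoints u \ {a, b} := by
    ext x
    simp only [mem_fixedPoints, IsFixedPt, comp_apply, mem_sdiff, mem_insert_iff,
      mem_singleton_iff]
    by_cases hxa : x = a
    · subst hxa
      simp [hb, hab.symm]
    by_cases hxb : x = b
    · subst hxb
      simp [ha, hab]
    simp [Equiv.swap_apply_of_ne_of_ne hxa hxb, hxa, hxb]
  rw [hfix, ← ncard_pair hab, ncard_sdiff_add_ncard_of_subset hsub]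

end FixedPoints

lemma commute_of_mul_self_eq_one {G : Type*} [Group G] {a b : G} (ha : a * a = 1)
    (hb : b * b = 1) (hab : a * b * (a * b) = 1) : Commute a b := by
  rw [mul_eq_one_iff_eq_inv] at ha hb hab
  calc a * b = b⁻¹ * a⁻¹ := by rw [hab, mul_inv_rev]
    _ = b * a := by rw [← ha, ← hb]

lemma mul_mul_self_eq_one_of_inv_eq {G : Type*} [Group G] {t v : G} (h : v⁻¹ = t * v * t) :
    t * v * (t * v) = 1 := by
  rw [← mul_assoc, ← h, inv_mul_cancel]

section AffinePermutations

variable {n : ℕ}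

section Periodic

variable {f : ℤ → ℤ}

lemma periodic_apply_sub_self (hf : ∀ x, f (x + n) = f x + n) : Periodic (fun x => f x - x) n :=
  fun x => by simp only [hf]; ring

lemma apply_add_int_mul (hf : ∀ x, f (x + n) = f x + n) (x k : ℤ) :
    f (x + k * n) = f x + k * n := by
  have := (periodic_apply_sub_self hf).int_mul k x
  simp only [Int.cast_id] at this
  linarith

lemma apply_sub_int_mul (hf : ∀ x, f (x + n) = f x + n) (x k : ℤ) :
    f (x - k * n) = f x - k * n := by
  simpa [neg_mul, ← sub_eq_add_neg] using apply_add_int_mul hf x (-k)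

lemma exists_abs_apply_sub_le (hf : ∀ x, f (x + n) = f x + n) (hn : 0 < n) :
    ∃ C, ∀ x, |f x - x| ≤ C := by
  obtain ⟨C, hC⟩ := ((Finset.Ico (0 : ℤ) n).image fun y => |f y - y|).bddAbove
  refine ⟨C, fun x => ?_⟩
  obtain ⟨y, hy, hxy⟩ := (periodic_apply_sub_self hf).exists_mem_Ico₀ (by exact_mod_cast hn) x
  rw [hxy]
  exact hC (Finset.mem_coe.mpr (Finset.mem_image_of_mem _ (Finset.mem_Ico.mpr hy)))

lemma mul_apply_add_of_apply_add {v w : Equiv.Perm ℤ} (hv : ∀ x, v (x + n) = v x + n)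
    (hw : ∀ x, w (x + n) = w x + n) (x : ℤ) : (v * w) (x + n) = (v * w) x + n := by
  simp only [Equiv.Perm.mul_apply, hw, hv]

end Periodic

section SimpleReflection

variable {i : ℕ}

lemma natCast_not_dvd_one (hn : 2 ≤ n) : ¬ (n : ℤ) ∣ 1 :=
  fun h => by have := Int.le_of_dvd one_pos h; omega

lemma sGen_apply (hn : 2 ≤ n) (i : ℕ) (j : ℤ) : sGen n i j = sFun n i j := by
  simp only [sGen, dif_neg (natCast_not_dvd_one hn)]
  rfl

lemma sGen_apply_cases (hn : 2 ≤ n) (i : ℕ) (j : ℤ) :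
    (n : ℤ) ∣ j - i ∧ sGen n i j = j + 1 ∨
      (n : ℤ) ∣ j - (i + 1) ∧ sGen n i j = j - 1 ∨
      ¬ (n : ℤ) ∣ j - i ∧ ¬ (n : ℤ) ∣ j - (i + 1) ∧ sGen n i j = j := by
  rw [sGen_apply hn, sFun]
  split_ifs <;> tauto

lemma sGen_apply_self (hn : 2 ≤ n) : sGen n i i = i + 1 := by
  rw [sGen_apply hn, sFun, if_pos (by simp)]

lemma sGen_apply_succ (hn : 2 ≤ n) : sGen n i (i + 1) = i := by
  rcases sGen_apply_cases hn i (i + 1) with ⟨h, -⟩ | ⟨-, e⟩ | ⟨-, h, -⟩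
  · exact absurd (by simpa using h) (natCast_not_dvd_one hn)
  · rw [e]
    ring
  · exact absurd (by simp) h

lemma sGen_sGen (hn : 2 ≤ n) (i : ℕ) (j : ℤ) : sGen n i (sGen n i j) = j := by
  simp only [sGen_apply hn]
  exact sFun_invol n i (natCast_not_dvd_one hn) j

lemma sGen_mul_self (hn : 2 ≤ n) (i : ℕ) : sGen n i * sGen n i = 1 :=
  Equiv.ext (sGen_sGen hn i)

lemma sGen_apply_add (hn : 2 ≤ n) (i : ℕ) (j : ℤ) : sGen n i (j + n) = sGen n i j + n := by
  have key (c : ℤ) : (n : ℤ) ∣ j + n - c ↔ (n : ℤ) ∣ j - c := by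
    rw [show j + n - c = j - c + n by ring, dvd_add_self_right]
  simp only [sGen_apply hn, sFun, key]
  split_ifs <;> ring

lemma sGen_lt_sGen (hn : 2 ≤ n) {a b : ℤ} (hab : a < b)
    (h : ¬ ((n : ℤ) ∣ a - i ∧ b = a + 1)) : sGen n i a < sGen n i b := by
  rcases sGen_apply_cases hn i a with ⟨ha, ea⟩ | ⟨ha, ea⟩ | ⟨ha, ha', ea⟩ <;>
    rcases sGen_apply_cases hn i b with ⟨hb, eb⟩ | ⟨hb, eb⟩ | ⟨hb, hb', eb⟩ <;>
    rw [ea, eb]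
  all_goals try omega
  · have hd : (n : ℤ) ∣ b - a - 1 := by
      simpa only [show b - (i + 1) - (a - i) = b - a - 1 by ring] using dvd_sub hb ha
    have : b ≠ a + 1 := fun e => h ⟨ha, e⟩
    have := Int.le_of_dvd (by omega) hd
    omega
  · have : b ≠ a + 1 := by
      rintro rfl
      exact ha (by simpa only [show a + 1 - (i + 1) = a - i by ring] using hb)
    omega

end SimpleReflection

section Length

variable {i : ℕ}

def inversions (n : ℕ) (w : ℤ → ℤ) : Set (ℤ × ℤ) :=
  {p | p.1 < p.2 ∧ 1 ≤ p.2 ∧ p.2 ≤ n ∧ w p.2 < w p.1}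

lemma ellA_eq_ncard_inversions (w : Equiv.Perm ℤ) : ellA n w = (inversions n w).ncard := rfl

lemma inversions_finite (hn : 0 < n) {w : ℤ → ℤ} (hw : ∀ x, w (x + n) = w x + n) :
    (inversions n w).Finite := by
  obtain ⟨C, hC⟩ := exists_abs_apply_sub_le hw hn
  refine ((finite_Icc (1 - 2 * C) n).prod (finite_Icc 1 (n : ℤ))).subset ?_
  rintro ⟨a, b⟩ ⟨hab, hb1, hbn, hwab⟩
  have ha := abs_le.mp (hC a)
  have hb := abs_le.mp (hC b)
  dsimp only at *
  exact ⟨⟨by linarith, by linarith⟩, hb1, hbn⟩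

/-- Translate a pair by a multiple of `(n, n)` so that its second entry lies in `[1, n]`. -/
def normalizePair (n : ℕ) (p : ℤ × ℤ) : ℤ × ℤ :=
  (p.1 - (p.2 - 1) / n * n, p.2 - (p.2 - 1) / n * n)

lemma normalizePair_of_mem {p : ℤ × ℤ} (h1 : 1 ≤ p.2) (h2 : p.2 ≤ n) :
    normalizePair n p = p := by
  rw [normalizePair, Int.ediv_eq_zero_of_lt (by omega) (by omega)]
  simp

lemma normalizePair_sub_mul (hn : 0 < n) (a b k : ℤ) :
    normalizePair n (a - k * n, b - k * n) = normalizePair n (a, b) := by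
  simp only [normalizePair]
  rw [show b - k * n - 1 = b - 1 + (-k) * n by ring, Int.add_mul_ediv_right _ _ (by omega)]
  ext <;> dsimp only <;> ring

lemma normalizePair_snd_mem (hn : 0 < n) (p : ℤ × ℤ) :
    1 ≤ (normalizePair n p).2 ∧ (normalizePair n p).2 ≤ n := by
  have h := Int.emod_add_mul_ediv (p.2 - 1) n
  have h0 := Int.emod_nonneg (p.2 - 1) (show (n : ℤ) ≠ 0 by omega)
  have h1 := Int.emod_lt_of_pos (p.2 - 1) (show (0 : ℤ) < n by omega)
  simp only [normalizePair]
  constructor <;> linarith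

/-- The action of `s_i` on inversions, normalized back into the window counted by `ellA`. -/
def sGenPair (n i : ℕ) (p : ℤ × ℤ) : ℤ × ℤ :=
  normalizePair n (sGen n i p.1, sGen n i p.2)

lemma sGenPair_sGenPair (hn : 2 ≤ n) {p : ℤ × ℤ} (h1 : 1 ≤ p.2) (h2 : p.2 ≤ n) :
    sGenPair n i (sGenPair n i p) = p := by
  obtain ⟨a, b⟩ := p
  simp only [sGenPair, normalizePair]
  rw [apply_sub_int_mul (sGen_apply_add hn i), apply_sub_int_mul (sGen_apply_add hn i),
    sGen_sGen hn, sGen_sGen hn]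
  exact (normalizePair_sub_mul (by omega) a b _).trans (normalizePair_of_mem h1 h2)

lemma mapsTo_sGenPair (hn : 2 ≤ n) (hi : i < n) {w : Equiv.Perm ℤ}
    (hw : ∀ x, w (x + n) = w x + n) :
    MapsTo (sGenPair n i) (inversions n ⇑(w * sGen n i) \ {((i : ℤ), (i : ℤ) + 1)})
      (inversions n w \ {((i : ℤ), (i : ℤ) + 1)}) := by
  rintro ⟨a, b⟩ ⟨⟨hab, hb1, hbn, hwab⟩, hne⟩
  simp only [mem_singleton_iff, Prod.mk.injEq, not_and] at hne
  dsimp only at hab hb1 hbn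
  simp only [Equiv.Perm.mul_apply] at hwab
  have hlt : sGen n i a < sGen n i b := by
    refine sGen_lt_sGen hn hab ?_
    rintro ⟨hd, rfl⟩
    have := Int.eq_zero_of_abs_lt_dvd hd (abs_lt.mpr ⟨by omega, by omega⟩)
    exact hne (by omega) (by omega)
  obtain ⟨hq1, hqn⟩ := normalizePair_snd_mem (n := n) (by omega) (sGen n i a, sGen n i b)
  simp only [sGenPair, normalizePair] at hq1 hqn ⊢
  set k := (sGen n i b - 1) / n
  refine ⟨⟨by linarith, hq1, hqn, ?_⟩, ?_⟩
  · dsimp only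
    rw [apply_sub_int_mul hw, apply_sub_int_mul hw]
    linarith
  · simp only [mem_singleton_iff, Prod.mk.injEq]
    rintro ⟨ha', hb'⟩
    have e1 := congrArg (sGen n i) ha'
    have e2 := congrArg (sGen n i) hb'
    rw [apply_sub_int_mul (sGen_apply_add hn i), sGen_sGen hn, sGen_apply_self hn] at e1
    rw [apply_sub_int_mul (sGen_apply_add hn i), sGen_sGen hn, sGen_apply_succ hn] at e2
    omega

lemma ellA_mul_sGen_of_lt (hn : 2 ≤ n) (hi : i < n) {w : Equiv.Perm ℤ}
    (hw : ∀ x, w (x + n) = w x + n) (h : w i < w (i + 1)) :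
    ellA n (w * sGen n i) = ellA n w + 1 := by
  set p₀ : ℤ × ℤ := ((i : ℤ), (i : ℤ) + 1)
  have hws := mul_apply_add_of_apply_add hw (sGen_apply_add hn i)
  have hp₀ : p₀ ∈ inversions n ⇑(w * sGen n i) := by
    refine ⟨by simp [p₀], by simp [p₀], by simp [p₀]; omega, ?_⟩
    simpa [p₀, sGen_apply_self hn, sGen_apply_succ hn] using h
  have hp₀' : p₀ ∉ inversions n w := fun ⟨_, _, _, h'⟩ => lt_asymm h h'
  have hbij : BijOn (sGenPair n i) (inversions n ⇑(w * sGen n i) \ {p₀})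
      (inversions n w \ {p₀}) := by
    have hinv : ∀ p ∈ inversions n ⇑(w * sGen n i) ∪ inversions n w,
        sGenPair n i (sGenPair n i p) = p := by
      rintro p (⟨-, hp1, hpn, -⟩ | ⟨-, hp1, hpn, -⟩) <;> exact sGenPair_sGenPair hn hp1 hpn
    refine InvOn.bijOn ⟨fun p hp => hinv p (.inl hp.1), fun p hp => hinv p (.inr hp.1)⟩
      (mapsTo_sGenPair hn hi hw) ?_
    simpa only [mul_assoc, sGen_mul_self hn, mul_one] using mapsTo_sGenPair hn hi hws
  rw [ellA_eq_ncard_inversions, ellA_eq_ncard_inversions,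
    ← ncard_sdiff_singleton_add_one hp₀ (inversions_finite (by omega) hws), hbij.ncard_eq,
    sdiff_singleton_eq_self hp₀']

lemma ellA_mul_sGen_of_gt (hn : 2 ≤ n) (hi : i < n) {w : Equiv.Perm ℤ}
    (hw : ∀ x, w (x + n) = w x + n) (h : w (i + 1) < w i) :
    ellA n w = ellA n (w * sGen n i) + 1 := by
  have := ellA_mul_sGen_of_lt hn hi (mul_apply_add_of_apply_add hw (sGen_apply_add hn i))
    (by simpa [sGen_apply_self hn, sGen_apply_succ hn] using h)
  rwa [mul_assoc, sGen_mul_self hn, mul_one] at this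

end Length

section Reduction

def PreservesModEq (n : ℕ) (f : ℤ → ℤ) : Prop :=
  ∀ ⦃x y : ℤ⦄, x ≡ y [ZMOD n] → f x ≡ f y [ZMOD n]

variable {f g : ℤ → ℤ}

lemma PreservesModEq.comp (hf : PreservesModEq n f) (hg : PreservesModEq n g) :
    PreservesModEq n (f ∘ g) :=
  fun _ _ h => hf (hg h)

lemma preservesModEq_of_apply_add (hf : ∀ x, f (x + n) = f x + n) : PreservesModEq n f := by
  intro x y h
  obtain ⟨k, hk⟩ := Int.modEq_iff_dvd.mp h.symm
  rw [show x = y + k * n by linarith, apply_add_int_mul hf]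
  exact (Int.modEq_iff_dvd.mpr ⟨k, by ring⟩).symm

lemma tauN_apply (x : ℤ) : tauN n x = n + 1 - x := rfl

lemma tauN_mul_self : tauN n * tauN n = 1 :=
  Equiv.ext (tau_aux n)

lemma preservesModEq_tauN : PreservesModEq n (tauN n) :=
  fun _ _ h => h.sub_left _

/-- The self-map of `ℤ/n` induced by `f`; meaningful when `PreservesModEq n f`. -/
def modMap (n : ℕ) (f : ℤ → ℤ) (r : ZMod n) : ZMod n := f (ZMod.cast r)

lemma modMap_intCast (hf : PreservesModEq n f) (x : ℤ) : modMap n f x = f x := by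
  rw [modMap, ZMod.intCast_eq_intCast_iff]
  exact hf ((ZMod.intCast_eq_intCast_iff _ _ _).mp (ZMod.intCast_zmod_cast _))

lemma modMap_comp (hf : PreservesModEq n f) (g : ℤ → ℤ) :
    modMap n (f ∘ g) = modMap n f ∘ modMap n g :=
  funext fun _ => (modMap_intCast hf _).symm

lemma modMap_id : modMap n id = id :=
  funext ZMod.intCast_zmod_cast

lemma modMap_tauN : modMap n (tauN n) = fun r => 1 - r := by
  funext r
  obtain ⟨x, rfl⟩ := ZMod.intCast_surjective r
  rw [modMap_intCast preservesModEq_tauN, tauN_apply]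
  simp

lemma modMap_sGen (hn : 2 ≤ n) (i : ℕ) :
    modMap n (sGen n i) = Equiv.swap (i : ZMod n) (i + 1) := by
  have hs : PreservesModEq n (sGen n i) := preservesModEq_of_apply_add (sGen_apply_add hn i)
  funext r
  obtain ⟨x, rfl⟩ := ZMod.intCast_surjective r
  have key (c : ℤ) : (n : ℤ) ∣ x - c ↔ (x : ZMod n) = c := by
    rw [eq_comm, ZMod.intCast_eq_intCast_iff_dvd_sub]
  rw [modMap_intCast hs]
  rcases sGen_apply_cases hn i x with ⟨hd, e⟩ | ⟨hd, e⟩ | ⟨hd, hd', e⟩ <;>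
    simp only [key, Int.cast_add, Int.cast_natCast, Int.cast_one] at hd ⊢ <;> rw [e]
  · push_cast
    rw [hd, Equiv.swap_apply_left]
  · push_cast
    rw [hd, Equiv.swap_apply_right]
    ring
  · simp only [key, Int.cast_add, Int.cast_natCast, Int.cast_one] at hd'
    rw [Equiv.swap_apply_of_ne_of_ne hd hd']

lemma ncard_setOf_mem_Icc_intCast (hn : 0 < n) (P : ZMod n → Prop) :
    {x : ℤ | 1 ≤ x ∧ x ≤ n ∧ P x}.ncard = {r : ZMod n | P r}.ncard := by
  have hinj : InjOn (Int.cast : ℤ → ZMod n) {x : ℤ | 1 ≤ x ∧ x ≤ n ∧ P x} := by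
    rintro x ⟨hx1, hxn, -⟩ y ⟨hy1, hyn, -⟩ hxy
    have := Int.eq_zero_of_abs_lt_dvd ((ZMod.intCast_eq_intCast_iff_dvd_sub _ _ _).mp hxy)
      (abs_lt.mpr ⟨by omega, by omega⟩)
    omega
  rw [← hinj.ncard_image]
  congr 1
  ext r
  constructor
  · rintro ⟨x, ⟨-, -, hx⟩, rfl⟩
    exact hx
  · intro hr
    obtain ⟨x, rfl⟩ := ZMod.intCast_surjective r
    have h0 := Int.emod_nonneg (x - 1) (show (n : ℤ) ≠ 0 by omega)
    have h1 := Int.emod_lt_of_pos (x - 1) (show (0 : ℤ) < n by omega)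
    refine ⟨(x - 1) % n + 1, ⟨by omega, by omega, by simpa [ZMod.intCast_mod] using hr⟩, ?_⟩
    simp [ZMod.intCast_mod]

lemma fTw_eq_ncard_fixedPoints (hn : 0 < n) {w : Equiv.Perm ℤ} (hw : PreservesModEq n w) :
    fTw n w = (fixedPoints (modMap n ⇑(tauN n * w))).ncard / 2 := by
  rw [fTw, fixedPoints, ← ncard_setOf_mem_Icc_intCast hn]
  congr 3
  ext x
  rw [IsFixedPt, Equiv.Perm.coe_mul, modMap_intCast (preservesModEq_tauN.comp hw),
    ZMod.intCast_eq_intCast_iff_dvd_sub, comp_apply,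
    show x - tauN n (w x) = w x - (1 - x) - n by rw [tauN_apply]; ring, dvd_sub_self_right]

end Reduction

lemma fTw_one (hn : 0 < n) : fTw n 1 = 0 := by
  rw [fTw_eq_ncard_fixedPoints hn (preservesModEq_of_apply_add fun _ => rfl), mul_one,
    modMap_tauN]
  have : NeZero n := ⟨by omega⟩
  have hle : (fixedPoints fun r : ZMod n => 1 - r).ncard ≤ 1 := by
    refine (ncard_le_one_iff (toFinite _)).mpr fun {r s} hr hs => ?_
    simp only [mem_fixedPoints, IsFixedPt] at hr hs
    -- `r` and `s` are both inverses of `2`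
    linear_combination r * hs - s * hr
  omega

lemma fTw_sGen_mul_mul (hn : 2 ≤ n) {w : Equiv.Perm ℤ} (hw : PreservesModEq n w) (i : ℕ) :
    fTw n (sGen n i * w * (tauN n * sGen n i * tauN n)) = fTw n w := by
  set c := tauN n * sGen n i * tauN n
  have hs : PreservesModEq n (sGen n i) := preservesModEq_of_apply_add (sGen_apply_add hn i)
  have hc : PreservesModEq n c := (preservesModEq_tauN.comp hs).comp preservesModEq_tauN
  have hconj : tauN n * (sGen n i * w * c) = c * (tauN n * w) * c := by
    simp only [c, mul_assoc]
    rw [← mul_assoc (tauN n) (tauN n), tauN_mul_self, one_mul]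
  have hcc : c * c = 1 := by
    simp only [c, mul_assoc]
    rw [← mul_assoc (tauN n) (tauN n), tauN_mul_self, one_mul, ← mul_assoc (sGen n i),
      sGen_mul_self hn, one_mul, tauN_mul_self]
  have hinv : Involutive (modMap n c) := by
    refine congrFun (?_ : modMap n c ∘ modMap n c = id)
    rw [← modMap_comp hc, ← Equiv.Perm.coe_mul, hcc, Equiv.Perm.coe_one, modMap_id]
  have hu : PreservesModEq n ⇑(tauN n * w) := preservesModEq_tauN.comp hw
  rw [fTw_eq_ncard_fixedPoints (by omega) ((hs.comp hw).comp hc),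
    fTw_eq_ncard_fixedPoints (by omega) hw, hconj, Equiv.Perm.coe_mul (c * _),
    Equiv.Perm.coe_mul c, modMap_comp (hc.comp hu), modMap_comp hc,
    ncard_fixedPoints_conj hinv]

lemma commute_sGen_cases (hn : 2 ≤ n) {i : ℕ} {u : Equiv.Perm ℤ} (hu : Commute u (sGen n i)) :
    (n : ℤ) ∣ u (i : ℤ) - i ∧ u ((i : ℤ) + 1) = u (i : ℤ) + 1 ∨
      (n : ℤ) ∣ u (i : ℤ) - (i + 1) ∧ u ((i : ℤ) + 1) = u (i : ℤ) - 1 := by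
  have h : u (i + 1) = sGen n i (u i) := by
    rw [← sGen_apply_self hn (i := i)]
    exact DFunLike.congr_fun hu.eq (i : ℤ)
  rcases sGen_apply_cases hn i (u i) with ⟨hd, e⟩ | ⟨hd, e⟩ | ⟨-, -, e⟩
  · exact .inl ⟨hd, h.trans e⟩
  · exact .inr ⟨hd, h.trans e⟩
  · have := u.injective (h.trans e)
    omega

lemma fTw_eq_fTw_mul_sGen_add_one (hn : 2 ≤ n) {i : ℕ} {w : Equiv.Perm ℤ}
    (hw : PreservesModEq n w) (hd : (n : ℤ) ∣ (tauN n * w) i - i)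
    (he : (tauN n * w) (i + 1) = (tauN n * w) i + 1) :
    fTw n w = fTw n (w * sGen n i) + 1 := by
  have : Fact (1 < n) := ⟨by omega⟩
  set u := tauN n * w with hu_def
  have hs : PreservesModEq n (sGen n i) := preservesModEq_of_apply_add (sGen_apply_add hn i)
  have hu : PreservesModEq n u := preservesModEq_tauN.comp hw
  have hui : ((u i : ℤ) : ZMod n) = i := by
    simpa using ((ZMod.intCast_eq_intCast_iff_dvd_sub _ _ _).mpr hd).symm
  have h1 : modMap n u i = i := by simpa [hui] using modMap_intCast hu i
  have h2 : modMap n u (i + 1) = i + 1 := by simpa [he, hui] using modMap_intCast hu (i + 1)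
  rw [fTw_eq_ncard_fixedPoints (by omega) hw,
    fTw_eq_ncard_fixedPoints (w := w * sGen n i) (by omega) (hw.comp hs), ← mul_assoc, ← hu_def,
    Equiv.Perm.coe_mul u, modMap_comp hu, modMap_sGen hn,
    ncard_fixedPoints_eq_comp_swap_add_two (by simp) h1 h2]
  omega

lemma fTw_mul_sGen_sub_fTw (hn : 2 ≤ n) {i : ℕ} (hi : i < n) {w : Equiv.Perm ℤ}
    (hw : ∀ x, w (x + n) = w x + n) (hcomm : Commute (tauN n * w) (sGen n i)) :
    (fTw n (w * sGen n i) : ℤ) - fTw n w = (ellA n (w * sGen n i) : ℤ) - ellA n w := by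
  have hw' : PreservesModEq n w := preservesModEq_of_apply_add hw
  have hs : PreservesModEq n (sGen n i) := preservesModEq_of_apply_add (sGen_apply_add hn i)
  rcases commute_sGen_cases hn hcomm with ⟨hd, he⟩ | ⟨hd, he⟩
  · have hf := fTw_eq_fTw_mul_sGen_add_one hn hw' hd he
    simp only [Equiv.Perm.mul_apply, tauN_apply] at he
    have hell := ellA_mul_sGen_of_gt hn hi hw (by linarith)
    omega
  · -- `w * s` falls under the first case, and `w * s * s = w`
    simp only [Equiv.Perm.mul_apply, tauN_apply] at hd he
    have hwi : w (i + 1) = w i + 1 := by linarith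
    have hf := fTw_eq_fTw_mul_sGen_add_one (i := i) (w := w * sGen n i) hn (hw'.comp hs)
      (by
        simp only [Equiv.Perm.mul_apply, tauN_apply, sGen_apply_self hn, hwi]
        rwa [show (n : ℤ) + 1 - (w i + 1) - i = n + 1 - w i - (i + 1) by ring])
      (by
        simp only [Equiv.Perm.mul_apply, tauN_apply, sGen_apply_self hn, sGen_apply_succ hn]
        linarith)
    rw [mul_assoc, sGen_mul_self hn, mul_one] at hf
    have hell := ellA_mul_sGen_of_lt hn hi hw (by linarith)
    omega

end AffinePermutations

/-- Let `n ≥ 2`, let `w* = τ_n ∘ w ∘ τ_n`, and let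
`I_* = {w ∈ S̃_n : w⁻¹ = w*}`. The function `f = fTw n` satisfies the three properties
characterizing Hultman's twisted absolute length: (a) `f(id) = 0`; (b) `f(s w s*) = f(w)` for
`w ∈ I_*` and every simple generator `s = s_i`, `0 ≤ i ≤ n−1`; (c) if `w ∈ I_*` and `w s ∈ I_*`
then `f(w s) − f(w) = ℓ(w s) − ℓ(w)` as integers. -/
theorem statement10 (n : ℕ) (hn : 2 ≤ n) :
    fTw n 1 = 0 ∧
    (∀ w : Equiv.Perm ℤ, IsAffinePerm n w → w⁻¹ = tauN n * w * tauN n →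
      ∀ i : ℕ, i ≤ n - 1 →
        fTw n (sGen n i * w * (tauN n * sGen n i * tauN n)) = fTw n w) ∧
    (∀ w : Equiv.Perm ℤ, IsAffinePerm n w → w⁻¹ = tauN n * w * tauN n →
      ∀ i : ℕ, i ≤ n - 1 →
        (w * sGen n i)⁻¹ = tauN n * (w * sGen n i) * tauN n →
        (fTw n (w * sGen n i) : ℤ) - (fTw n w : ℤ) =
          (ellA n (w * sGen n i) : ℤ) - (ellA n w : ℤ)) := by
  refine ⟨fTw_one (by omega), fun w hw _ i _ =>
    fTw_sGen_mul_mul hn (preservesModEq_of_apply_add hw.1) i, fun w hw hI i hi hI' =>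
    fTw_mul_sGen_sub_fTw hn (by omega) hw.1 ?_⟩
  exact commute_of_mul_self_eq_one (mul_mul_self_eq_one_of_inv_eq hI) (sGen_mul_self hn i)
    (by simpa only [mul_assoc] using mul_mul_self_eq_one_of_inv_eq hI')
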